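/- For the Kovalevskaya vector field X = (2γ₃M₂−4γ₂M₃, −2γ₃M₁+4γ₁M₃, 2γ₂M₁−2γ₁M₂, −2M₂M₃, 2M₁M₃−aγ₃, aγ₂) on ℝ⁶ with coordinates (γ₁,γ₂,γ₃,M₁,M₂,M₃) and parameter a ∈ ℝ, the four functions f₁ = γ₁²+γ₂²+γ₃², f₂ = γ₁M₁+γ₂M₂+γ₃M₃, f₃ = M₁²+M₂²+2M₃²+aγ₁, f₄ = (M₁²−M₂²−aγ₁)² + (2M₁M₂−aγ₂)² are first integrals (∑_i X_i ∂f_k/∂x_i = 0 for k = 1,2,3,4 at every point), and the divergence of X vanishes identically: ∑_{i=1}^6 ∂X_i/∂x_i = 0. -/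

import Mathlib

/-!
Since `pdᵢ f x = fderiv f x eᵢ`, each sum `∑ᵢ Xᵢ ∂ᵢf` is the directional derivative
`fderiv f x (X x)`, and after the chain rule its vanishing is a polynomial identity.
The divergence vanishes term by term: no component `Xᵢ` depends on `xᵢ`.
-/

noncomputable section

open scoped BigOperators

def pd {n : ℕ} (i : Fin n) (f : (Fin n → ℝ) → ℝ) (x : Fin n → ℝ) : ℝ :=
  fderiv ℝ f x (Pi.single i 1)

/-- The Kovalevskaya vector field on `ℝ⁶` with coordinates
`(x₁,…,x₆) = (γ₁,γ₂,γ₃,M₁,M₂,M₃)`. -/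
def kovX (a : ℝ) (x : Fin 6 → ℝ) : Fin 6 → ℝ :=
  ![2 * x 2 * x 4 - 4 * x 1 * x 5, -(2 * x 2 * x 3) + 4 * x 0 * x 5,
    2 * x 1 * x 3 - 2 * x 0 * x 4, -(2 * x 4 * x 5), 2 * x 3 * x 5 - a * x 2,
    a * x 1]

def kovF₁ (x : Fin 6 → ℝ) : ℝ := x 0 ^ 2 + x 1 ^ 2 + x 2 ^ 2

def kovF₂ (x : Fin 6 → ℝ) : ℝ := x 0 * x 3 + x 1 * x 4 + x 2 * x 5

def kovF₃ (a : ℝ) (x : Fin 6 → ℝ) : ℝ :=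
  x 3 ^ 2 + x 4 ^ 2 + 2 * x 5 ^ 2 + a * x 0

def kovF₄ (a : ℝ) (x : Fin 6 → ℝ) : ℝ :=
  (x 3 ^ 2 - x 4 ^ 2 - a * x 0) ^ 2 + (2 * x 3 * x 4 - a * x 1) ^ 2

open Function ContinuousLinearMap

section PartialDerivatives

variable {n : ℕ} {f : (Fin n → ℝ) → ℝ} {x : Fin n → ℝ}

theorem sum_mul_pd_eq_fderiv (f : (Fin n → ℝ) → ℝ) (x v : Fin n → ℝ) :
    ∑ i, v i * pd i f x = fderiv ℝ f x v := by
  conv_rhs => rw [← Finset.univ_sum_single v]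
  simp only [map_sum, pd]
  refine Finset.sum_congr rfl fun i _ => ?_
  rw [← smul_eq_mul, ← map_smul, ← Pi.single_smul', smul_eq_mul, mul_one]

theorem pd_eq_zero_of_forall_update {i : Fin n} (h : ∀ t, f (update x i t) = f x) :
    pd i f x = 0 := by
  by_cases hf : DifferentiableAt ℝ f x
  · have hline : (fun t : ℝ => f (x + t • Pi.single i 1)) = fun _ => f x := by
      funext t
      rw [← h (x i + t)]
      congr 1
      ext j
      rcases eq_or_ne j i with rfl | hj <;> simp [*]
    rw [pd, ← hf.lineDeriv_eq_fderiv, lineDeriv, hline, deriv_const]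
  · rw [pd, fderiv_zero_of_not_differentiableAt hf, zero_apply]

end PartialDerivatives

section Kovalevskaya

variable (a : ℝ) (x : Fin 6 → ℝ)

theorem kovX_update_self (i : Fin 6) (t : ℝ) : kovX a (update x i t) i = kovX a x i := by
  fin_cases i <;> simp [kovX]

theorem sum_pd_kovX_eq_zero : ∑ i, pd i (fun y => kovX a y i) x = 0 :=
  Finset.sum_eq_zero fun i _ => pd_eq_zero_of_forall_update (kovX_update_self a x i)

theorem sum_kovX_mul_pd_kovF₁_eq_zero : ∑ i, kovX a x i * pd i kovF₁ x = 0 := by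
  have hx (j : Fin 6) := hasFDerivAt_apply (𝕜 := ℝ) j x
  have hf : HasFDerivAt kovF₁ _ x := (((hx 0).pow 2).add ((hx 1).pow 2)).add ((hx 2).pow 2)
  rw [sum_mul_pd_eq_fderiv, hf.fderiv]
  simp only [kovX, add_apply, smul_apply, proj_apply, nsmul_eq_mul, Nat.add_one_sub_one, pow_one,
    Nat.cast_ofNat, smul_eq_mul, Matrix.cons_val, Matrix.cons_val_zero, Matrix.cons_val_one]
  ring

theorem sum_kovX_mul_pd_kovF₂_eq_zero : ∑ i, kovX a x i * pd i kovF₂ x = 0 := by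
  have hx (j : Fin 6) := hasFDerivAt_apply (𝕜 := ℝ) j x
  have hf : HasFDerivAt kovF₂ _ x :=
    (((hx 0).mul (hx 3)).add ((hx 1).mul (hx 4))).add ((hx 2).mul (hx 5))
  rw [sum_mul_pd_eq_fderiv, hf.fderiv]
  simp only [kovX, add_apply, smul_apply, proj_apply, smul_eq_mul, Matrix.cons_val,
    Matrix.cons_val_zero, Matrix.cons_val_one]
  ring

theorem sum_kovX_mul_pd_kovF₃_eq_zero : ∑ i, kovX a x i * pd i (kovF₃ a) x = 0 := by
  have hx (j : Fin 6) := hasFDerivAt_apply (𝕜 := ℝ) j x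
  have hf : HasFDerivAt (kovF₃ a) _ x :=
    ((((hx 3).pow 2).add ((hx 4).pow 2)).add (((hx 5).pow 2).const_mul 2)).add
      ((hx 0).const_mul a)
  rw [sum_mul_pd_eq_fderiv, hf.fderiv]
  simp only [kovX, add_apply, smul_apply, proj_apply, nsmul_eq_mul, Nat.add_one_sub_one, pow_one,
    Nat.cast_ofNat, smul_eq_mul, Matrix.cons_val, Matrix.cons_val_zero]
  ring

theorem sum_kovX_mul_pd_kovF₄_eq_zero : ∑ i, kovX a x i * pd i (kovF₄ a) x = 0 := by
  have hx (j : Fin 6) := hasFDerivAt_apply (𝕜 := ℝ) j x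
  have hu := (((hx 3).pow 2).sub ((hx 4).pow 2)).sub ((hx 0).const_mul a)
  have hv := (((hx 3).const_mul 2).mul (hx 4)).sub ((hx 1).const_mul a)
  have hf : HasFDerivAt (kovF₄ a) _ x := (hu.pow 2).add (hv.pow 2)
  rw [sum_mul_pd_eq_fderiv, hf.fderiv]
  simp only [kovX, add_apply, sub_apply, smul_apply, proj_apply, Pi.sub_apply, Pi.mul_apply,
    nsmul_eq_mul, Nat.add_one_sub_one, pow_one, Nat.cast_ofNat, smul_eq_mul, Matrix.cons_val,
    Matrix.cons_val_zero, Matrix.cons_val_one]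
  ring

end Kovalevskaya

/-- In the Kovalevskaya case, `f₁, f₂, f₃, f₄` are first integrals of `X` and the
divergence of `X` vanishes identically. -/
theorem kovalevskaya_first_integrals_and_divergence_free (a : ℝ) (x : Fin 6 → ℝ) :
    (∑ i, kovX a x i * pd i kovF₁ x = 0) ∧
    (∑ i, kovX a x i * pd i kovF₂ x = 0) ∧
    (∑ i, kovX a x i * pd i (kovF₃ a) x = 0) ∧
    (∑ i, kovX a x i * pd i (kovF₄ a) x = 0) ∧
    (∑ i, pd i (fun y => kovX a y i) x = 0) :=
  ⟨sum_kovX_mul_pd_kovF₁_eq_zero a x, sum_kovX_mul_pd_kovF₂_eq_zero a x,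
    sum_kovX_mul_pd_kovF₃_eq_zero a x, sum_kovX_mul_pd_kovF₄_eq_zero a x,
    sum_pd_kovX_eq_zero a x⟩
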